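/- Fix κ > 0 and k ∈ ℕ. Suppose α* > 2 satisfies F̃_k(α*) = 0 where F̃_k(α) = (κ/α)·I_{k+1}(κ/α)/I_k(κ/α) + α·J_{k+1}(α)/J_k(α). Then F̃_k'(α*) = (2κ²/(α*)³)·(u² + 2ku/z + (α*)²/(2z²) − 1/2) with z = κ/α* and u = I_{k+1}(z)/I_k(z), and this quantity is strictly positive. In particular every root of F̃_k greater than 2 is simple. -/

import Mathlib

open Real Filter Set

/-- Modified Bessel function of the first kind of order `ν`, defined by its power series
(valid for `z > 0`). -/
noncomputable def besselI (ν : ℝ) (z : ℝ) : ℝ :=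
  ∑' m : ℕ, (z / 2) ^ (2 * (m : ℝ) + ν) / ((m.factorial : ℝ) * Real.Gamma ((m : ℝ) + ν + 1))

/-- Bessel function of the first kind of order `ν`, defined by its power series
(valid for `z > 0`). -/
noncomputable def besselJ (ν : ℝ) (z : ℝ) : ℝ :=
  ∑' m : ℕ, (-1 : ℝ) ^ m * (z / 2) ^ (2 * (m : ℝ) + ν) /
    ((m.factorial : ℝ) * Real.Gamma ((m : ℝ) + ν + 1))

/-- The function `F̃_k` from the paper (here `κ > 0`, `k ∈ ℕ`). -/
noncomputable def Ftilde (κ : ℝ) (k : ℕ) (α : ℝ) : ℝ :=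
  (κ / α) * besselI (k + 1) (κ / α) / besselI k (κ / α)
    + α * besselJ (k + 1) α / besselJ k α

/-!
Both terms of `F̃_k` have the form `g(x) = x C_{k+1}(x) / C_k(x)` with `C = I` at `x = κ/α` and
`C = J` at `x = α`. The recurrences `C_k' = ±C_{k+1} + (k/x) C_k` and
`x C_k = ±x C_{k+2} + 2(k+1) C_{k+1}` give `g' = x - (2k g ± g²)/x`, so at a root, where the
`J`-term equals `-q` with `q = z u`, `z = κ/α`, the derivative is `(2q² + 4kq + α² - z²)/α`.
Turán's inequality `I_k I_{k+2} < I_{k+1}²`, read off the Cauchy product of the power series,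
gives `q² + 2(k+1) q > z²`; applied at order `k + 1` together with the recurrence it also gives
`q < z`, i.e. `u < 1`. With `α > 2` the numerator is then larger than `(z - 2)² ≥ 0`.
-/

open scoped Nat

theorem Nat.factorial_succ_mul_factorial_succ_lt (p : ℕ) : (p + 1)! * (p + 1)! < p ! * (p + 2)! :=
  calc (p + 1)! * (p + 1)! = (p + 1) * (p ! * (p + 1)!) := by rw [Nat.factorial_succ p]; ring
    _ < (p + 2) * (p ! * (p + 1)!) := Nat.mul_lt_mul_of_pos_right (by omega) (by positivity)
    _ = p ! * (p + 2)! := by rw [Nat.factorial_succ (p + 1)]; ring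

namespace BesselSeries

/-- `besselSeries 1 n` is `I_n` and `besselSeries (-1) n` is `J_n` (`besselI_natCast`,
`besselJ_natCast`); keeping the sign `ε` as a parameter gives the identities for both at once. -/
noncomputable def besselTerm (ε : ℝ) (n : ℕ) (z : ℝ) (m : ℕ) : ℝ :=
  ε ^ m * (z / 2) ^ (2 * m + n) / (m ! * (m + n)!)

noncomputable def besselSeries (ε : ℝ) (n : ℕ) (z : ℝ) : ℝ :=
  ∑' m, besselTerm ε n z m

noncomputable def scaledBesselRatio (ε : ℝ) (n : ℕ) (z : ℝ) : ℝ :=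
  z * besselSeries ε (n + 1) z / besselSeries ε n z

variable (ε : ℝ) (n : ℕ) (z : ℝ)

theorem norm_besselTerm_le (m : ℕ) :
    ‖besselTerm ε n z m‖ ≤ (|z| / 2) ^ n * (|ε| * (|z| / 2) ^ 2) ^ m / m ! := by
  have hfac : (1 : ℝ) ≤ (m + n)! := by exact_mod_cast (m + n).factorial_pos
  calc ‖besselTerm ε n z m‖ = |ε| ^ m * (|z| / 2) ^ (2 * m + n) / (m ! * (m + n)!) := by
        simp [besselTerm]
    _ ≤ |ε| ^ m * (|z| / 2) ^ (2 * m + n) / m ! := by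
        gcongr
        exact le_mul_of_one_le_right (by positivity) hfac
    _ = (|z| / 2) ^ n * (|ε| * (|z| / 2) ^ 2) ^ m / m ! := by rw [pow_add, pow_mul]; ring

theorem summable_norm_besselTerm : Summable fun m => ‖besselTerm ε n z m‖ := by
  refine .of_nonneg_of_le (fun _ => norm_nonneg _) (norm_besselTerm_le ε n z) ?_
  simpa only [mul_div_assoc] using
    (Real.summable_pow_div_factorial (|ε| * (|z| / 2) ^ 2)).mul_left ((|z| / 2) ^ n)

theorem hasSum_besselTerm : HasSum (besselTerm ε n z) (besselSeries ε n z) :=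
  (summable_norm_besselTerm ε n z).of_norm.hasSum

theorem mul_besselTerm (m : ℕ) :
    z * besselTerm ε n z m = 2 * (m + n + 1) * besselTerm ε (n + 1) z m := by
  rw [besselTerm, besselTerm, show m + (n + 1) = m + n + 1 by ring, Nat.factorial_succ]
  push_cast
  field_simp
  ring

theorem besselTerm_succ (m : ℕ) :
    2 * (m + 1) * besselTerm ε n z (m + 1) = ε * z * besselTerm ε (n + 1) z m := by
  rw [besselTerm, besselTerm, show m + 1 + n = m + (n + 1) by ring, Nat.factorial_succ]
  push_cast
  field_simp
  ring

theorem hasSum_two_mul_besselTerm :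
    HasSum (fun m => 2 * m * besselTerm ε n z m) (ε * z * besselSeries ε (n + 1) z) := by
  have h : HasSum (fun m : ℕ => 2 * ((m + 1 : ℕ) : ℝ) * besselTerm ε n z (m + 1))
      (ε * z * besselSeries ε (n + 1) z) := by
    refine ((hasSum_besselTerm ε (n + 1) z).mul_left (ε * z)).congr_fun fun m => ?_
    push_cast
    exact besselTerm_succ ε n z m
  have h0 := h.zero_add (f := fun m : ℕ => 2 * (m : ℝ) * besselTerm ε n z m)
  rwa [Nat.cast_zero, mul_zero, zero_mul, zero_add] at h0

theorem besselSeries_recurrence :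
    z * besselSeries ε n z
      = ε * z * besselSeries ε (n + 2) z + 2 * (n + 1) * besselSeries ε (n + 1) z := by
  have h := (hasSum_two_mul_besselTerm ε (n + 1) z).add
    ((hasSum_besselTerm ε (n + 1) z).mul_left (2 * ((n : ℝ) + 1)))
  refine ((hasSum_besselTerm ε n z).mul_left z).unique (h.congr_fun fun m => ?_)
  rw [mul_besselTerm]
  ring

theorem sum_antidiagonal_besselTerm_mul (a b N : ℕ) :
    ∑ p ∈ Finset.HasAntidiagonal.antidiagonal N, besselTerm ε a z p.1 * besselTerm ε b z p.2
      = ε ^ N * (z / 2) ^ (2 * N + a + b) * (a + b + 2 * N).choose N / ((a + N)! * (b + N)!) := by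
  have hterm : ∀ p ∈ Finset.HasAntidiagonal.antidiagonal N,
      besselTerm ε a z p.1 * besselTerm ε b z p.2
        = ε ^ N * (z / 2) ^ (2 * N + a + b) / ((a + N)! * (b + N)!)
          * ((b + N).choose p.1 * (a + N).choose p.2 : ℕ) := by
    rintro ⟨i, j⟩ hij
    rw [Finset.HasAntidiagonal.mem_antidiagonal] at hij
    subst hij
    rw [besselTerm, besselTerm, Nat.cast_mul, Nat.cast_choose ℝ (by omega : i ≤ b + (i + j)),
      Nat.cast_choose ℝ (by omega : j ≤ a + (i + j)), show b + (i + j) - i = j + b by omega,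
      show a + (i + j) - j = i + a by omega]
    rw [show 2 * (i + j) + a + b = (2 * i + a) + (2 * j + b) by ring, pow_add, pow_add]
    field_simp
    ring
  rw [Finset.sum_congr rfl hterm, ← Finset.mul_sum, ← Nat.cast_sum, ← Nat.add_choose_eq,
    show b + N + (a + N) = a + b + 2 * N by ring]
  ring

theorem hasSum_besselSeries_mul (a b : ℕ) :
    HasSum (fun N => ε ^ N * (z / 2) ^ (2 * N + a + b) * (a + b + 2 * N).choose N
      / ((a + N)! * (b + N)!)) (besselSeries ε a z * besselSeries ε b z) := by
  have hs := (summable_norm_sum_mul_antidiagonal_of_summable_norm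
    (summable_norm_besselTerm ε a z) (summable_norm_besselTerm ε b z)).of_norm.hasSum
  rw [← tsum_mul_tsum_eq_tsum_sum_antidiagonal_of_summable_norm
    (summable_norm_besselTerm ε a z) (summable_norm_besselTerm ε b z)] at hs
  exact hs.congr_fun fun N => (sum_antidiagonal_besselTerm_mul ε z a b N).symm

-- The form `HasDerivAt.pow` produces; unlike `(2m + n) * besselTerm / z` it is meaningful at `0`,
-- which the domination argument on `(-R, R)` in `hasDerivAt_besselSeries` needs.
noncomputable def besselTermDeriv (m : ℕ) : ℝ :=
  ε ^ m * ((2 * m + n : ℕ) * (z / 2) ^ (2 * m + n - 1) * (1 / 2)) / (m ! * (m + n)!)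

theorem hasDerivAt_besselTerm (m : ℕ) :
    HasDerivAt (fun y => besselTerm ε n y m) (besselTermDeriv ε n z m) z :=
  ((((hasDerivAt_id z).div_const 2).pow (2 * m + n)).const_mul (ε ^ m)).div_const _

theorem abs_besselTermDeriv_le {y R : ℝ} (hy : |y| ≤ R) (m : ℕ) :
    |besselTermDeriv ε n y m| ≤ besselTermDeriv |ε| n R m := by
  simp only [besselTermDeriv, abs_div, abs_mul, abs_pow, Nat.abs_cast, abs_two, abs_one]
  gcongr

variable {z}

theorem besselTermDeriv_eq (hz : z ≠ 0) (m : ℕ) :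
    besselTermDeriv ε n z m = (2 * m + n) * besselTerm ε n z m / z := by
  rw [besselTermDeriv, besselTerm, show (2 * m + n : ℝ) = (2 * m + n : ℕ) by push_cast; rfl]
  generalize 2 * m + n = k
  cases k with
  | zero => simp
  | succ j =>
    rw [Nat.add_sub_cancel, pow_succ]
    field_simp

theorem hasSum_besselTermDeriv (hz : z ≠ 0) :
    HasSum (besselTermDeriv ε n z)
      (ε * besselSeries ε (n + 1) z + n * besselSeries ε n z / z) := by
  have h := ((hasSum_two_mul_besselTerm ε n z).add
    ((hasSum_besselTerm ε n z).mul_left (n : ℝ))).div_const z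
  rw [add_div, mul_right_comm ε z, mul_div_cancel_right₀ _ hz] at h
  refine h.congr_fun fun m => ?_
  rw [besselTermDeriv_eq ε n hz]
  ring

theorem hasDerivAt_besselSeries (hz : z ≠ 0) :
    HasDerivAt (besselSeries ε n)
      (ε * besselSeries ε (n + 1) z + n * besselSeries ε n z / z) z := by
  set R := |z| + 1
  have hR : R ≠ 0 := by positivity
  have hzR : z ∈ Ioo (-R) R := abs_lt.mp (lt_add_one _)
  rw [← (hasSum_besselTermDeriv ε n hz).tsum_eq]
  exact hasDerivAt_tsum_of_isPreconnected (hasSum_besselTermDeriv |ε| n hR).summable isOpen_Ioo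
    isPreconnected_Ioo (fun m y _ => hasDerivAt_besselTerm ε n y m)
    (fun m y hy => abs_besselTermDeriv_le ε n (abs_lt.mpr hy).le m) hzR
    (hasSum_besselTerm ε n z).summable hzR

theorem besselSeries_one_pos (hz : 0 < z) : 0 < besselSeries 1 n z :=
  (hasSum_besselTerm 1 n z).summable.tsum_pos (fun m => by simp only [besselTerm]; positivity) 0
    (by simp only [besselTerm]; positivity)

-- Turán's inequality, coefficientwise in the Cauchy product.
theorem besselSeries_one_mul_lt_sq (hz : 0 < z) :
    besselSeries 1 n z * besselSeries 1 (n + 2) z < besselSeries 1 (n + 1) z ^ 2 := by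
  have hterm : ∀ N : ℕ,
      (1 : ℝ) ^ N * (z / 2) ^ (2 * N + n + (n + 2)) * (n + (n + 2) + 2 * N).choose N
        / ((n + N)! * (n + 2 + N)!)
      < 1 ^ N * (z / 2) ^ (2 * N + (n + 1) + (n + 1)) * (n + 1 + (n + 1) + 2 * N).choose N
        / ((n + 1 + N)! * (n + 1 + N)!) := fun N => ?_
  · rw [sq]
    exact hasSum_lt (fun N => (hterm N).le) (hterm 0) (hasSum_besselSeries_mul 1 z n (n + 2))
      (hasSum_besselSeries_mul 1 z (n + 1) (n + 1))
  rw [show 2 * N + n + (n + 2) = 2 * N + (n + 1) + (n + 1) by ring,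
    show n + (n + 2) + 2 * N = n + 1 + (n + 1) + 2 * N by ring]
  have hchoose : 0 < (n + 1 + (n + 1) + 2 * N).choose N := Nat.choose_pos (by omega)
  refine div_lt_div_of_pos_left (by positivity) (by positivity) ?_
  rw [show n + 1 + N = n + N + 1 by ring, show n + 2 + N = n + N + 2 by ring]
  exact_mod_cast Nat.factorial_succ_mul_factorial_succ_lt (n + N)

theorem hasDerivAt_scaledBesselRatio (hz : z ≠ 0) (h0 : besselSeries ε n z ≠ 0) :
    HasDerivAt (scaledBesselRatio ε n)
      (z - (2 * n * scaledBesselRatio ε n z + ε * scaledBesselRatio ε n z ^ 2) / z) z := by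
  have h := ((hasDerivAt_id z).mul (hasDerivAt_besselSeries ε (n + 1) hz)).div
    (hasDerivAt_besselSeries ε n hz) h0
  refine h.congr_deriv ?_
  simp only [scaledBesselRatio, Pi.mul_apply, id, Nat.cast_succ, show n + 1 + 1 = n + 2 from rfl]
  field_simp
  linear_combination -besselSeries ε n z * besselSeries_recurrence ε n z

theorem scaledBesselRatio_one_pos (hz : 0 < z) : 0 < scaledBesselRatio 1 n z :=
  div_pos (mul_pos hz (besselSeries_one_pos (n + 1) hz)) (besselSeries_one_pos n hz)

theorem scaledBesselRatio_one_quadratic_pos (hz : 0 < z) :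
    0 < scaledBesselRatio 1 n z ^ 2 + 2 * (n + 1) * scaledBesselRatio 1 n z - z ^ 2 := by
  have ha := besselSeries_one_pos n hz
  have h : scaledBesselRatio 1 n z ^ 2 + 2 * (n + 1) * scaledBesselRatio 1 n z - z ^ 2
      = z ^ 2 * (besselSeries 1 (n + 1) z ^ 2 - besselSeries 1 n z * besselSeries 1 (n + 2) z)
        / besselSeries 1 n z ^ 2 := by
    rw [scaledBesselRatio]
    field_simp
    linear_combination -besselSeries 1 n z * besselSeries_recurrence 1 n z
  rw [h]
  have := sub_pos.mpr (besselSeries_one_mul_lt_sq n hz)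
  positivity

theorem scaledBesselRatio_one_mul_succ (hz : 0 < z) :
    scaledBesselRatio 1 n z * (scaledBesselRatio 1 (n + 1) z + 2 * (n + 1)) = z ^ 2 := by
  have ha := (besselSeries_one_pos n hz).ne'
  have hb := (besselSeries_one_pos (n + 1) hz).ne'
  simp only [scaledBesselRatio, show n + 1 + 1 = n + 2 from rfl]
  field_simp
  linear_combination -besselSeries_recurrence 1 n z

-- With `q_n = scaledBesselRatio 1 n z`: if `q_n ≥ z`, then `q_n (q_{n+1} + 2(n+1)) = z²`
-- forces `q_{n+1} + 2(n+1) ≤ z`, which contradicts the quadratic inequality at order `n + 1`.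
theorem scaledBesselRatio_one_lt (hz : 0 < z) : scaledBesselRatio 1 n z < z := by
  have hq := scaledBesselRatio_one_pos n hz
  have hq' := scaledBesselRatio_one_pos (n + 1) hz
  have hquad := scaledBesselRatio_one_quadratic_pos (n + 1) hz
  have hrec := scaledBesselRatio_one_mul_succ n hz
  by_contra! hle
  have hq'_le : scaledBesselRatio 1 (n + 1) z + 2 * (n + 1) ≤ z := by nlinarith
  push_cast at hquad
  nlinarith

end BesselSeries

open BesselSeries

theorem besselI_natCast (n : ℕ) (z : ℝ) : besselI n z = besselSeries 1 n z := by
  unfold besselI besselSeries besselTerm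
  congr 1
  funext m
  rw [← Nat.cast_add, Real.Gamma_nat_eq_factorial, ← Nat.cast_ofNat, ← Nat.cast_mul,
    ← Nat.cast_add, Real.rpow_natCast, one_pow, one_mul]

theorem besselJ_natCast (n : ℕ) (z : ℝ) : besselJ n z = besselSeries (-1) n z := by
  unfold besselJ besselSeries besselTerm
  congr 1
  funext m
  rw [← Nat.cast_add, Real.Gamma_nat_eq_factorial, ← Nat.cast_ofNat, ← Nat.cast_mul,
    ← Nat.cast_add, Real.rpow_natCast]

theorem Ftilde_eq_scaledBesselRatio (κ : ℝ) (k : ℕ) :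
    Ftilde κ k = fun α => scaledBesselRatio 1 k (κ / α) + scaledBesselRatio (-1) k α := by
  funext α
  rw [Ftilde, ← Nat.cast_succ, besselI_natCast, besselI_natCast, besselJ_natCast,
    besselJ_natCast]
  rfl

theorem hasDerivAt_Ftilde_of_root {κ α : ℝ} (k : ℕ) (hκ : 0 < κ) (hα : 0 < α)
    (hroot : Ftilde κ k α = 0) :
    HasDerivAt (Ftilde κ k) ((2 * scaledBesselRatio 1 k (κ / α) ^ 2
      + 4 * k * scaledBesselRatio 1 k (κ / α) + α ^ 2 - (κ / α) ^ 2) / α) α := by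
  rw [Ftilde_eq_scaledBesselRatio] at hroot ⊢
  dsimp only at hroot
  have hz : 0 < κ / α := div_pos hκ hα
  have hq := scaledBesselRatio_one_pos k hz
  have hJ : besselSeries (-1) k α ≠ 0 := by
    intro h
    have hzero : scaledBesselRatio (-1) k α = 0 := by rw [scaledBesselRatio, h, div_zero]
    rw [hzero, add_zero] at hroot
    exact hq.ne' hroot
  have hI := (hasDerivAt_scaledBesselRatio 1 k hz.ne' (besselSeries_one_pos k hz).ne').comp α
    ((hasDerivAt_inv hα.ne').const_mul κ)
  refine (hI.add (hasDerivAt_scaledBesselRatio (-1) k hα.ne' hJ)).congr_deriv ?_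
  rw [eq_neg_of_add_eq_zero_right hroot]
  field_simp
  ring

/-- At any root `α* > 2` of `F̃_k`, the derivative equals
`(2κ²/(α*)³)·(u² + 2ku/z + (α*)²/(2z²) − 1/2)` with `z = κ/α*`, `u = I_{k+1}(z)/I_k(z)`,
and this quantity is strictly positive; in particular such roots are simple. -/
theorem stmt10 (κ : ℝ) (hκ : 0 < κ) (k : ℕ) (αs : ℝ) (hαs : 2 < αs)
    (hroot : Ftilde κ k αs = 0) :
    deriv (Ftilde κ k) αs
        = (2 * κ ^ 2 / αs ^ 3) *
            ((besselI (k + 1) (κ / αs) / besselI k (κ / αs)) ^ 2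
              + 2 * k * (besselI (k + 1) (κ / αs) / besselI k (κ / αs)) / (κ / αs)
              + αs ^ 2 / (2 * (κ / αs) ^ 2) - 1 / 2) ∧
      0 < deriv (Ftilde κ k) αs := by
  have hα : 0 < αs := by linarith
  have hz : 0 < κ / αs := div_pos hκ hα
  have hqz := scaledBesselRatio_one_lt k hz
  have hquad := scaledBesselRatio_one_quadratic_pos k hz
  rw [(hasDerivAt_Ftilde_of_root k hκ hα hroot).deriv]
  set q := scaledBesselRatio 1 k (κ / αs) with hq
  -- `2q² + 4kq > 2(κ/α)² - 4q > 2(κ/α)² - 4(κ/α)` and `α² > 4` leave `(κ/α - 2)² ≥ 0`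
  have hpos : 0 < 2 * q ^ 2 + 4 * k * q + αs ^ 2 - (κ / αs) ^ 2 := by
    nlinarith [sq_nonneg (κ / αs - 2)]
  refine ⟨?_, div_pos hpos hα⟩
  have hI := besselSeries_one_pos k hz
  rw [hq, scaledBesselRatio, ← Nat.cast_succ, besselI_natCast, besselI_natCast]
  field_simp
  ring
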